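/- arXiv:2309.12286 — 7 statements merged into one kernel-verified Lean document; each statement's English description precedes it below -/
import Mathlib

section
/- If A₀, A₁, B₀, B₁ are Hermitian unitary operators on Hilbert spaces H_A and H_B respectively, and ψ is a unit vector in H_A ⊗ H_B, then the expectation value ⟨ψ, (A₀⊗B₀ + A₀⊗B₁ + A₁⊗B₀ - A₁⊗B₁)ψ⟩ is at most 2√2 (Tsirelson's bound). -/
open scoped InnerProductSpace

private lemma herm_unit_norm_apply
    {H : Type*} [NormedAddCommGroup H] [InnerProductSpace ℂ H] [CompleteSpace H]
    (A : H →L[ℂ] H) (hsa : IsSelfAdjoint A) (hu : A * A = 1) (x : H) :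
    ‖A x‖ = ‖x‖ := by
  have h1 : ⟪A x, A x⟫_ℂ = ⟪x, x⟫_ℂ := by
    rw [← ContinuousLinearMap.adjoint_inner_right, hsa.adjoint_eq]
    have : A (A x) = (A * A) x := rfl
    rw [this, hu, ContinuousLinearMap.one_apply]
  have h3 : (‖A x‖ : ℝ) ^ 2 = ‖x‖ ^ 2 := by
    rw [← inner_self_eq_norm_sq (𝕜 := ℂ), ← inner_self_eq_norm_sq (𝕜 := ℂ), h1]
  nlinarith [norm_nonneg (A x), norm_nonneg x]

/-- **Tsirelson's bound.**  A₀, A₁ are Hermitian unitary operators on Alice's side and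
B₀, B₁ Hermitian unitary operators on Bob's side; acting on the joint Hilbert space
(via tensoring with the identity) Alice's operators commute with Bob's.  For any unit
vector ψ of the joint space, the expectation value of the CHSH operator
S = A₀B₀ + A₀B₁ + A₁B₀ − A₁B₁ is at most 2√2. -/
theorem tsirelson_bound
    {H : Type*} [NormedAddCommGroup H] [InnerProductSpace ℂ H] [CompleteSpace H]
    (A₀ A₁ B₀ B₁ : H →L[ℂ] H)
    (hA₀sa : IsSelfAdjoint A₀) (hA₁sa : IsSelfAdjoint A₁)
    (hB₀sa : IsSelfAdjoint B₀) (hB₁sa : IsSelfAdjoint B₁)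
    (hA₀u : A₀ * A₀ = 1) (hA₁u : A₁ * A₁ = 1)
    (hB₀u : B₀ * B₀ = 1) (hB₁u : B₁ * B₁ = 1)
    (hcomm : ∀ A ∈ ({A₀, A₁} : Set (H →L[ℂ] H)), ∀ B ∈ ({B₀, B₁} : Set (H →L[ℂ] H)),
      Commute A B)
    (ψ : H) (hψ : ‖ψ‖ = 1) :
    (⟪ψ, (A₀ * B₀ + A₀ * B₁ + A₁ * B₀ - A₁ * B₁) ψ⟫_ℂ).re ≤ 2 * Real.sqrt 2 := by
  set u := B₀ ψ + B₁ ψ with hu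
  set v := B₀ ψ - B₁ ψ with hv
  have hSψ : (A₀ * B₀ + A₀ * B₁ + A₁ * B₀ - A₁ * B₁) ψ = A₀ u + A₁ v := by
    simp [hu, hv, map_add, map_sub]
    abel
  have key : ∀ (A : H →L[ℂ] H), IsSelfAdjoint A → A * A = 1 → ∀ w : H,
      (⟪ψ, A w⟫_ℂ).re ≤ ‖w‖ := by
    intro A hsa hAu w
    have h1 : ⟪ψ, A w⟫_ℂ = ⟪A ψ, w⟫_ℂ := by
      rw [← ContinuousLinearMap.adjoint_inner_left, hsa.adjoint_eq]
    rw [h1]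
    calc (⟪A ψ, w⟫_ℂ).re ≤ ‖⟪A ψ, w⟫_ℂ‖ := Complex.re_le_norm _
      _ ≤ ‖A ψ‖ * ‖w‖ := norm_inner_le_norm _ _
      _ = ‖w‖ := by rw [herm_unit_norm_apply A hsa hAu, hψ, one_mul]
  have h₀ : (⟪ψ, A₀ u⟫_ℂ).re ≤ ‖u‖ := key A₀ hA₀sa hA₀u u
  have h₁ : (⟪ψ, A₁ v⟫_ℂ).re ≤ ‖v‖ := key A₁ hA₁sa hA₁u v
  have hpar : ‖u‖ ^ 2 + ‖v‖ ^ 2 = 4 := by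
    have := parallelogram_law_with_norm ℂ (B₀ ψ) (B₁ ψ)
    have e0 : ‖B₀ ψ‖ = 1 := by rw [herm_unit_norm_apply B₀ hB₀sa hB₀u, hψ]
    have e1 : ‖B₁ ψ‖ = 1 := by rw [herm_unit_norm_apply B₁ hB₁sa hB₁u, hψ]
    rw [e0, e1] at this
    simp only [hu, hv]
    nlinarith [this]
  have hsum : ‖u‖ + ‖v‖ ≤ 2 * Real.sqrt 2 := by
    nlinarith [sq_nonneg (‖u‖ - ‖v‖), Real.sq_sqrt (by norm_num : (2:ℝ) ≥ 0),
      Real.sqrt_nonneg 2, norm_nonneg u, norm_nonneg v,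
      sq_nonneg (‖u‖ + ‖v‖ - 2 * Real.sqrt 2)]
  calc (⟪ψ, (A₀ * B₀ + A₀ * B₁ + A₁ * B₀ - A₁ * B₁) ψ⟫_ℂ).re
      = (⟪ψ, A₀ u⟫_ℂ).re + (⟪ψ, A₁ v⟫_ℂ).re := by
        rw [hSψ, inner_add_right]; simp
    _ ≤ ‖u‖ + ‖v‖ := add_le_add h₀ h₁
    _ ≤ 2 * Real.sqrt 2 := hsum
end

section
/- For Hermitian unitary operators A₀, A₁ on H_A and commuting Hermitian unitary operators B₀, C₀₁ on H_B, and any angle α, the operator 2√2·1 − S'_α, where S'_α = cos α · S₊ + sin α · S₋ and S₊ = (A₀+A₁)⊗B₀ + (A₀−A₁)⊗C₀₁, S₋ = (A₀+A₁)⊗B₀ − (A₀−A₁)⊗C₀₁, equals the sum of squares (1/√2)[sin(π/4+α)·1⊗B₀ + cos(π/4+α)·1⊗C₀₁ − A₀⊗1]² + (1/√2)[sin(π/4+α)·1⊗B₀ − cos(π/4+α)·1⊗C₀₁ − A₁⊗1]². -/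
/-!
Expanding both squares with `x * x = 1` and the commutation of Alice's operators with Bob's,
the `B₀ C₀₁` cross terms cancel and, as `sin² + cos² = 1`, the sum of the squares is
`4 - 2 sin(π/4 + α) (A₀ + A₁) B₀ - 2 cos(π/4 + α) (A₀ - A₁) C₀₁`. Since
`√2 sin(π/4 + α) = cos α + sin α` and `√2 cos(π/4 + α) = cos α - sin α`, this is `√2 (2√2 - S'_α)`.
-/

section Involutions

variable {𝕜 R : Type*} [CommRing 𝕜] [Ring R] [Algebra 𝕜 R]

theorem mul_self_add_mul_self_of_involutions {a₀ a₁ b c : R}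
    (ha₀ : a₀ * a₀ = 1) (ha₁ : a₁ * a₁ = 1) (hb : b * b = 1) (hc : c * c = 1)
    (ha₀b : Commute a₀ b) (ha₀c : Commute a₀ c) (ha₁b : Commute a₁ b) (ha₁c : Commute a₁ c)
    {s t : 𝕜} (hst : s ^ 2 + t ^ 2 = 1) :
    (s • b + t • c - a₀) * (s • b + t • c - a₀) + (s • b - t • c - a₁) * (s • b - t • c - a₁) =
      (4 : 𝕜) • 1 - (2 * s) • ((a₀ + a₁) * b) - (2 * t) • ((a₀ - a₁) * c) := by
  have h4 : (4 : 𝕜) = 2 * (s ^ 2 + t ^ 2) + 2 := by rw [hst]; norm_num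
  simp only [mul_add, add_mul, mul_sub, sub_mul, smul_mul_assoc, mul_smul_comm,
    ha₀, ha₁, hb, hc, ha₀b.symm.eq, ha₀c.symm.eq, ha₁b.symm.eq, ha₁c.symm.eq, h4]
  module

end Involutions

namespace Real

theorem sqrt_two_mul_sin_pi_div_four_add (α : ℝ) : √2 * sin (π / 4 + α) = cos α + sin α := by
  rw [sin_add, sin_pi_div_four, cos_pi_div_four]
  ring_nf
  rw [sq_sqrt zero_le_two]
  ring

theorem sqrt_two_mul_cos_pi_div_four_add (α : ℝ) : √2 * cos (π / 4 + α) = cos α - sin α := by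
  rw [cos_add, sin_pi_div_four, cos_pi_div_four]
  ring_nf
  rw [sq_sqrt zero_le_two]
  ring

end Real

theorem sos_decomposition_Salpha_general
    {H : Type*} [NormedAddCommGroup H] [InnerProductSpace ℂ H] [CompleteSpace H]
    (A₀ A₁ B₀ C₀₁ : H →L[ℂ] H)
    (hA₀u : A₀ * A₀ = 1) (hA₁u : A₁ * A₁ = 1)
    (hB₀u : B₀ * B₀ = 1) (hC₀₁u : C₀₁ * C₀₁ = 1)
    (hcomm : ∀ A ∈ ({A₀, A₁} : Set (H →L[ℂ] H)), ∀ B ∈ ({B₀, C₀₁} : Set (H →L[ℂ] H)),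
      Commute A B)
    (α : ℝ) :
    let Sp := (A₀ + A₁) * B₀ + (A₀ - A₁) * C₀₁
    let Sm := (A₀ + A₁) * B₀ - (A₀ - A₁) * C₀₁
    let S'α := (Real.cos α : ℂ) • Sp + (Real.sin α : ℂ) • Sm
    let Q₀ := (Real.sin (Real.pi / 4 + α) : ℂ) • B₀ + (Real.cos (Real.pi / 4 + α) : ℂ) • C₀₁ - A₀
    let Q₁ := (Real.sin (Real.pi / 4 + α) : ℂ) • B₀ - (Real.cos (Real.pi / 4 + α) : ℂ) • C₀₁ - A₁
    ((2 * Real.sqrt 2 : ℝ) : ℂ) • (1 : H →L[ℂ] H) - S'α =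
      (((Real.sqrt 2)⁻¹ : ℝ) : ℂ) • (Q₀ * Q₀) + (((Real.sqrt 2)⁻¹ : ℝ) : ℂ) • (Q₁ * Q₁) := by
  intro Sp Sm S'α Q₀ Q₁
  have hinv : (√2)⁻¹ * 2 = √2 := by rw [inv_mul_eq_div, Real.div_sqrt]
  have h4 : (√2)⁻¹ * 4 = 2 * √2 := by linear_combination 2 * hinv
  have hs : (√2)⁻¹ * (2 * Real.sin (Real.pi / 4 + α)) = Real.cos α + Real.sin α := by
    rw [← mul_assoc, hinv, Real.sqrt_two_mul_sin_pi_div_four_add]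
  have hc : (√2)⁻¹ * (2 * Real.cos (Real.pi / 4 + α)) = Real.cos α - Real.sin α := by
    rw [← mul_assoc, hinv, Real.sqrt_two_mul_cos_pi_div_four_add]
  have hsc : (Real.sin (Real.pi / 4 + α) : ℂ) ^ 2 + (Real.cos (Real.pi / 4 + α) : ℂ) ^ 2 = 1 := by
    exact_mod_cast Real.sin_sq_add_cos_sq (Real.pi / 4 + α)
  rw [← smul_add, mul_self_add_mul_self_of_involutions hA₀u hA₁u hB₀u hC₀₁u
    (hcomm _ (by simp) _ (by simp)) (hcomm _ (by simp) _ (by simp))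
    (hcomm _ (by simp) _ (by simp)) (hcomm _ (by simp) _ (by simp)) hsc]
  simp only [S'α, Sp, Sm, smul_sub, smul_smul, ← Complex.ofReal_ofNat, ← Complex.ofReal_mul,
    h4, hs, hc]
  module

/-- **Sum-of-squares decomposition of 2√2·1 − S'_α.**
A₀, A₁ are Hermitian unitaries on Alice's side, B₀, C₀₁ commuting Hermitian unitaries
on Bob's side; on the joint Hilbert space (tensoring with identity) Alice's operators
commute with Bob's.  With S₊ = (A₀+A₁)B₀ + (A₀−A₁)C₀₁, S₋ = (A₀+A₁)B₀ − (A₀−A₁)C₀₁ and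
S'_α = cos α · S₊ + sin α · S₋, the operator 2√2·1 − S'_α equals
(1/√2)[sin(π/4+α)B₀ + cos(π/4+α)C₀₁ − A₀]² + (1/√2)[sin(π/4+α)B₀ − cos(π/4+α)C₀₁ − A₁]². -/
theorem sos_decomposition_Salpha
    {H : Type*} [NormedAddCommGroup H] [InnerProductSpace ℂ H] [CompleteSpace H]
    (A₀ A₁ B₀ C₀₁ : H →L[ℂ] H)
    (hA₀sa : IsSelfAdjoint A₀) (hA₁sa : IsSelfAdjoint A₁)
    (hB₀sa : IsSelfAdjoint B₀) (hC₀₁sa : IsSelfAdjoint C₀₁)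
    (hA₀u : A₀ * A₀ = 1) (hA₁u : A₁ * A₁ = 1)
    (hB₀u : B₀ * B₀ = 1) (hC₀₁u : C₀₁ * C₀₁ = 1)
    (hBC : Commute B₀ C₀₁)
    (hcomm : ∀ A ∈ ({A₀, A₁} : Set (H →L[ℂ] H)), ∀ B ∈ ({B₀, C₀₁} : Set (H →L[ℂ] H)),
      Commute A B)
    (α : ℝ) :
    let Sp := (A₀ + A₁) * B₀ + (A₀ - A₁) * C₀₁
    let Sm := (A₀ + A₁) * B₀ - (A₀ - A₁) * C₀₁
    let S'α := (Real.cos α : ℂ) • Sp + (Real.sin α : ℂ) • Sm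
    let Q₀ := (Real.sin (Real.pi / 4 + α) : ℂ) • B₀ + (Real.cos (Real.pi / 4 + α) : ℂ) • C₀₁ - A₀
    let Q₁ := (Real.sin (Real.pi / 4 + α) : ℂ) • B₀ - (Real.cos (Real.pi / 4 + α) : ℂ) • C₀₁ - A₁
    ((2 * Real.sqrt 2 : ℝ) : ℂ) • (1 : H →L[ℂ] H) - S'α =
      (((Real.sqrt 2)⁻¹ : ℝ) : ℂ) • (Q₀ * Q₀) + (((Real.sqrt 2)⁻¹ : ℝ) : ℂ) • (Q₁ * Q₁) :=
  sos_decomposition_Salpha_general A₀ A₁ B₀ C₀₁ hA₀u hA₁u hB₀u hC₀₁u hcomm α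
end

section
/- For Hermitian unitary operators A₀, A₁ on H_A and commuting Hermitian unitary operators B₀, C₀₁ on H_B, and any angle α, the expectation value on any unit vector of S'_α = cos α · S₊ + sin α · S₋ (with S₊, S₋ as the CHSH-like combinations (A₀+A₁)⊗B₀ ± (A₀−A₁)⊗C₀₁) is at most 2√2. -/
open scoped InnerProductSpace

private lemma Salpha_aux (c s rT rU x y : ℝ) (hx : 0 ≤ x) (hy : 0 ≤ y)
    (hxy : x^2 + y^2 = 4) (hcs : c^2 + s^2 = 2)
    (h1 : rT ≤ x) (h2 : -x ≤ rT) (h3 : rU ≤ y) (h4 : -y ≤ rU) :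
    c * rT + s * rU ≤ 2 * Real.sqrt 2 := by
  have hrT2 : rT^2 ≤ x^2 := by nlinarith
  have hrU2 : rU^2 ≤ y^2 := by nlinarith
  have ht2 : (c * rT + s * rU)^2 ≤ 8 := by
    nlinarith [sq_nonneg (c * rU - s * rT)]
  rcases le_or_gt (c * rT + s * rU) 0 with h | h
  · have : (0:ℝ) ≤ 2 * Real.sqrt 2 := by positivity
    linarith
  · have h8 : (8:ℝ) = (2 * Real.sqrt 2)^2 := by
      have : Real.sqrt 2 ^ 2 = 2 := Real.sq_sqrt (by norm_num)
      nlinarith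
    nlinarith [Real.sqrt_nonneg 2, ht2, h8, h]

/-- **Tsirelson-like bound for S'_α.**  With A₀, A₁ Hermitian unitaries on Alice's side,
B₀, C₀₁ commuting Hermitian unitaries on Bob's side (Alice's operators commuting with
Bob's on the joint space), and S₊ = (A₀+A₁)B₀ + (A₀−A₁)C₀₁, S₋ = (A₀+A₁)B₀ − (A₀−A₁)C₀₁,
the expectation value of S'_α = cos α · S₊ + sin α · S₋ on any unit vector is ≤ 2√2. -/
theorem Salpha_bound
    {H : Type*} [NormedAddCommGroup H] [InnerProductSpace ℂ H] [CompleteSpace H]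
    (A₀ A₁ B₀ C₀₁ : H →L[ℂ] H)
    (hA₀sa : IsSelfAdjoint A₀) (hA₁sa : IsSelfAdjoint A₁)
    (hB₀sa : IsSelfAdjoint B₀) (hC₀₁sa : IsSelfAdjoint C₀₁)
    (hA₀u : A₀ * A₀ = 1) (hA₁u : A₁ * A₁ = 1)
    (hB₀u : B₀ * B₀ = 1) (hC₀₁u : C₀₁ * C₀₁ = 1)
    (hBC : Commute B₀ C₀₁)
    (hcomm : ∀ A ∈ ({A₀, A₁} : Set (H →L[ℂ] H)), ∀ B ∈ ({B₀, C₀₁} : Set (H →L[ℂ] H)),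
      Commute A B)
    (α : ℝ) (ψ : H) (hψ : ‖ψ‖ = 1) :
    let Sp := (A₀ + A₁) * B₀ + (A₀ - A₁) * C₀₁
    let Sm := (A₀ + A₁) * B₀ - (A₀ - A₁) * C₀₁
    let S'α := (Real.cos α : ℂ) • Sp + (Real.sin α : ℂ) • Sm
    (⟪ψ, S'α ψ⟫_ℂ).re ≤ 2 * Real.sqrt 2 := by
  intro Sp Sm S'α
  -- commutation facts
  have h00 : Commute A₀ B₀ := hcomm A₀ (by simp) B₀ (by simp)
  have h01 : Commute A₀ C₀₁ := hcomm A₀ (by simp) C₀₁ (by simp)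
  have h10 : Commute A₁ B₀ := hcomm A₁ (by simp) B₀ (by simp)
  have h11 : Commute A₁ C₀₁ := hcomm A₁ (by simp) C₀₁ (by simp)
  have hcAB : Commute (A₀ + A₁) B₀ := h00.add_left h10
  have hcAC : Commute (A₀ - A₁) C₀₁ := h01.sub_left h11
  set T := (A₀ + A₁) * B₀ with hTdef
  set U := (A₀ - A₁) * C₀₁ with hUdef
  -- self-adjointness
  have hAsum : IsSelfAdjoint (A₀ + A₁) := hA₀sa.add hA₁sa
  have hAdiff : IsSelfAdjoint (A₀ - A₁) := hA₀sa.sub hA₁sa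
  have hTsa : IsSelfAdjoint T := by
    rw [hTdef, IsSelfAdjoint, star_mul, hB₀sa.star_eq, hAsum.star_eq]
    exact hcAB.eq.symm
  have hUsa : IsSelfAdjoint U := by
    rw [hUdef, IsSelfAdjoint, star_mul, hC₀₁sa.star_eq, hAdiff.star_eq]
    exact hcAC.eq.symm
  -- squares
  have hTT : T * T = (A₀ + A₁) * (A₀ + A₁) := by
    rw [hTdef, hcAB.symm.mul_mul_mul_comm, hB₀u, mul_one]
  have hUU : U * U = (A₀ - A₁) * (A₀ - A₁) := by
    rw [hUdef, hcAC.symm.mul_mul_mul_comm, hC₀₁u, mul_one]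
  have key : T * T + U * U = (4 : ℂ) • (1 : H →L[ℂ] H) := by
    rw [hTT, hUU]
    have : (A₀ + A₁) * (A₀ + A₁) + (A₀ - A₁) * (A₀ - A₁)
        = (2 : ℂ) • (A₀ * A₀) + (2 : ℂ) • (A₁ * A₁) := by
      simp only [add_mul, mul_add, sub_mul, mul_sub, two_smul]
      abel
    rw [this, hA₀u, hA₁u]
    module
  -- norms of Tψ, Uψ
  have hadjT : ContinuousLinearMap.adjoint T = T :=
    (ContinuousLinearMap.isSelfAdjoint_iff'.mp hTsa)
  have hadjU : ContinuousLinearMap.adjoint U = U :=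
    (ContinuousLinearMap.isSelfAdjoint_iff'.mp hUsa)
  have hnormT : ⟪ψ, (T * T) ψ⟫_ℂ = (‖T ψ‖ : ℂ)^2 := by
    rw [ContinuousLinearMap.mul_apply, ← ContinuousLinearMap.adjoint_inner_left, hadjT,
      inner_self_eq_norm_sq_to_K]
    norm_cast
  have hnormU : ⟪ψ, (U * U) ψ⟫_ℂ = (‖U ψ‖ : ℂ)^2 := by
    rw [ContinuousLinearMap.mul_apply, ← ContinuousLinearMap.adjoint_inner_left, hadjU,
      inner_self_eq_norm_sq_to_K]
    norm_cast
  have hsum4 : ‖T ψ‖^2 + ‖U ψ‖^2 = 4 := by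
    have h1 : ⟪ψ, (T * T + U * U) ψ⟫_ℂ = (4 : ℂ) := by
      rw [key]
      simp only [ContinuousLinearMap.smul_apply, ContinuousLinearMap.one_apply,
        inner_smul_right, inner_self_eq_norm_sq_to_K, hψ]
      norm_num
    rw [ContinuousLinearMap.add_apply, inner_add_right, hnormT, hnormU] at h1
    have := congrArg Complex.re h1
    simpa [Complex.add_re, ← Complex.ofReal_pow, Complex.ofReal_re] using this
  -- decompose the inner product
  set c : ℝ := Real.cos α + Real.sin α with hc
  set s : ℝ := Real.cos α - Real.sin α with hs
  have hdecomp : ⟪ψ, S'α ψ⟫_ℂ = (c : ℂ) * ⟪ψ, T ψ⟫_ℂ + (s : ℂ) * ⟪ψ, U ψ⟫_ℂ := by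
    show ⟪ψ, ((Real.cos α : ℂ) • (T + U) + (Real.sin α : ℂ) • (T - U)) ψ⟫_ℂ = _
    simp only [ContinuousLinearMap.add_apply, ContinuousLinearMap.sub_apply,
      ContinuousLinearMap.smul_apply, inner_add_right, inner_sub_right, inner_smul_right,
      hc, hs]
    push_cast
    ring
  have hre : (⟪ψ, S'α ψ⟫_ℂ).re = c * (⟪ψ, T ψ⟫_ℂ).re + s * (⟪ψ, U ψ⟫_ℂ).re := by
    rw [hdecomp]
    simp [Complex.add_re, Complex.mul_re]
  -- bounds on individual terms
  have hbT : (⟪ψ, T ψ⟫_ℂ).re ≤ ‖T ψ‖ := by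
    calc (⟪ψ, T ψ⟫_ℂ).re ≤ ‖⟪ψ, T ψ⟫_ℂ‖ := Complex.re_le_norm _
      _ ≤ ‖ψ‖ * ‖T ψ‖ := norm_inner_le_norm _ _
      _ = ‖T ψ‖ := by rw [hψ, one_mul]
  have hbT' : -‖T ψ‖ ≤ (⟪ψ, T ψ⟫_ℂ).re := by
    have : |(⟪ψ, T ψ⟫_ℂ).re| ≤ ‖⟪ψ, T ψ⟫_ℂ‖ := Complex.abs_re_le_norm _
    have h2 : ‖⟪ψ, T ψ⟫_ℂ‖ ≤ ‖T ψ‖ := by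
      calc ‖⟪ψ, T ψ⟫_ℂ‖ ≤ ‖ψ‖ * ‖T ψ‖ := norm_inner_le_norm _ _
        _ = ‖T ψ‖ := by rw [hψ, one_mul]
    cases abs_le.mp (this.trans h2) with
    | intro h _ => exact h
  have hbU : (⟪ψ, U ψ⟫_ℂ).re ≤ ‖U ψ‖ := by
    calc (⟪ψ, U ψ⟫_ℂ).re ≤ ‖⟪ψ, U ψ⟫_ℂ‖ := Complex.re_le_norm _
      _ ≤ ‖ψ‖ * ‖U ψ‖ := norm_inner_le_norm _ _
      _ = ‖U ψ‖ := by rw [hψ, one_mul]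
  have hbU' : -‖U ψ‖ ≤ (⟪ψ, U ψ⟫_ℂ).re := by
    have : |(⟪ψ, U ψ⟫_ℂ).re| ≤ ‖⟪ψ, U ψ⟫_ℂ‖ := Complex.abs_re_le_norm _
    have h2 : ‖⟪ψ, U ψ⟫_ℂ‖ ≤ ‖U ψ‖ := by
      calc ‖⟪ψ, U ψ⟫_ℂ‖ ≤ ‖ψ‖ * ‖U ψ‖ := norm_inner_le_norm _ _
        _ = ‖U ψ‖ := by rw [hψ, one_mul]
    cases abs_le.mp (this.trans h2) with
    | intro h _ => exact h
  -- trig identity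
  have hcs : c^2 + s^2 = 2 := by
    have := Real.sin_sq_add_cos_sq α
    rw [hc, hs]; nlinarith
  rw [hre]
  exact Salpha_aux c s _ _ ‖T ψ‖ ‖U ψ‖ (norm_nonneg _) (norm_nonneg _) hsum4 hcs
    hbT hbT' hbU hbU'
end

section
/- Let ψ be a unit vector and A₀, A₁ Hermitian unitaries on H_A, and B₀, C₀₀, C₀₁ Hermitian unitaries on H_B with [B₀, C₀₀] = [B₀, C₀₁] = 0. Define Z_A = (A₀+A₁)/√2 and X_A = (A₀−A₁)/√2, and suppose ⟨Z_A ⊗ C₀₀⟩_ψ = ⟨X_A ⊗ B₁⟩_ψ = 1 (saturation of the CHSH operator S_c) so that {A₀,A₁}ψ = 0. Then for P = 2^{−1/4}(1 − cos 2θ · Z_A⊗B₀ − sin 2θ · X_A⊗C₀₁), one has ⟨P²⟩_ψ = √2 − ⟨S_θ⟩_ψ, where S_θ = cos 2θ (S₁ − √2·1) + sin 2θ (S₂ − √2·1), S₁ = (A₀+A₁)⊗B₀ + (A₀−A₁)⊗B₁ and S₂ = (A₀+A₁)⊗C₀₀ + (A₀−A₁)⊗C₀₁. -/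
open scoped InnerProductSpace

/-- **⟨P²⟩ = √2 − ⟨S_θ⟩.**  A₀, A₁ are Hermitian unitaries on Alice's side; B₀, B₁, C₀₀, C₀₁
Hermitian unitaries on the Bobs' side with [B₀,C₀₀] = [B₀,C₀₁] = 0; Alice's operators commute
with the Bobs'.  With Z_A = (A₀+A₁)/√2, X_A = (A₀−A₁)/√2, assuming the CHSH-saturation
consequences ⟨Z_A C₀₀⟩_ψ = ⟨X_A B₁⟩_ψ = 1 and {A₀,A₁}ψ = 0, the auxiliary Hermitian operator
P = 2^(−1/4)(1 − cos 2θ · Z_A B₀ − sin 2θ · X_A C₀₁) satisfies ⟨P²⟩_ψ = √2 − ⟨S_θ⟩_ψ, where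
S_θ = cos 2θ (S₁ − √2·1) + sin 2θ (S₂ − √2·1), S₁ = (A₀+A₁)B₀ + (A₀−A₁)B₁ and
S₂ = (A₀+A₁)C₀₀ + (A₀−A₁)C₀₁. -/
theorem expectation_Psq_eq
    {H : Type*} [NormedAddCommGroup H] [InnerProductSpace ℂ H] [CompleteSpace H]
    (A₀ A₁ B₀ B₁ C₀₀ C₀₁ : H →L[ℂ] H)
    (hA₀sa : IsSelfAdjoint A₀) (hA₁sa : IsSelfAdjoint A₁)
    (hB₀sa : IsSelfAdjoint B₀) (hB₁sa : IsSelfAdjoint B₁)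
    (hC₀₀sa : IsSelfAdjoint C₀₀) (hC₀₁sa : IsSelfAdjoint C₀₁)
    (hA₀u : A₀ * A₀ = 1) (hA₁u : A₁ * A₁ = 1)
    (hB₀u : B₀ * B₀ = 1) (hB₁u : B₁ * B₁ = 1)
    (hC₀₀u : C₀₀ * C₀₀ = 1) (hC₀₁u : C₀₁ * C₀₁ = 1)
    (hB₀C₀₀ : Commute B₀ C₀₀) (hB₀C₀₁ : Commute B₀ C₀₁)
    (hcomm : ∀ A ∈ ({A₀, A₁} : Set (H →L[ℂ] H)),
      ∀ B ∈ ({B₀, B₁, C₀₀, C₀₁} : Set (H →L[ℂ] H)), Commute A B)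
    (θ : ℝ) (ψ : H) (hψ : ‖ψ‖ = 1)
    (hZC : ⟪ψ, (((((Real.sqrt 2)⁻¹ : ℝ) : ℂ) • (A₀ + A₁)) * C₀₀) ψ⟫_ℂ = 1)
    (hXB : ⟪ψ, (((((Real.sqrt 2)⁻¹ : ℝ) : ℂ) • (A₀ - A₁)) * B₁) ψ⟫_ℂ = 1)
    (hanti : (A₀ * A₁ + A₁ * A₀) ψ = 0) :
    let ZA := ((((Real.sqrt 2)⁻¹ : ℝ) : ℂ) • (A₀ + A₁))
    let XA := ((((Real.sqrt 2)⁻¹ : ℝ) : ℂ) • (A₀ - A₁))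
    let S₁ := (A₀ + A₁) * B₀ + (A₀ - A₁) * B₁
    let S₂ := (A₀ + A₁) * C₀₀ + (A₀ - A₁) * C₀₁
    let Sθ := (Real.cos (2 * θ) : ℂ) • (S₁ - ((Real.sqrt 2 : ℝ) : ℂ) • (1 : H →L[ℂ] H))
      + (Real.sin (2 * θ) : ℂ) • (S₂ - ((Real.sqrt 2 : ℝ) : ℂ) • (1 : H →L[ℂ] H))
    let P := (((2 : ℝ) ^ (-(1/4 : ℝ)) : ℝ) : ℂ) •
      ((1 : H →L[ℂ] H) - (Real.cos (2 * θ) : ℂ) • (ZA * B₀) - (Real.sin (2 * θ) : ℂ) • (XA * C₀₁))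
    ⟪ψ, (P * P) ψ⟫_ℂ = ((Real.sqrt 2 : ℝ) : ℂ) - ⟪ψ, Sθ ψ⟫_ℂ := by
  intro ZA XA S₁ S₂ Sθ P
  set r : ℂ := (((Real.sqrt 2)⁻¹ : ℝ) : ℂ) with hrdef
  set w : ℂ := ((Real.sqrt 2 : ℝ) : ℂ) with hwdef
  set c : ℂ := ((Real.cos (2*θ) : ℝ) : ℂ) with hcdef
  set s : ℂ := ((Real.sin (2*θ) : ℝ) : ℂ) with hsdef
  set t : ℂ := (((2:ℝ) ^ (-(1/4:ℝ)) : ℝ) : ℂ) with htdef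
  have hZA : ZA = r • (A₀ + A₁) := rfl
  have hXA : XA = r • (A₀ - A₁) := rfl
  -- scalar facts
  have h2 : Real.sqrt 2 * Real.sqrt 2 = 2 := Real.mul_self_sqrt (by norm_num)
  have hww : w * w = 2 := by
    rw [hwdef, ← Complex.ofReal_mul, h2]; norm_num
  have hw0 : w ≠ 0 := by
    rw [hwdef]
    exact_mod_cast Real.sqrt_ne_zero'.mpr (by norm_num)
  have hrw : r = w⁻¹ := by rw [hrdef, hwdef, Complex.ofReal_inv]
  have httR : (2:ℝ) ^ (-(1/4:ℝ)) * (2:ℝ) ^ (-(1/4:ℝ)) = (Real.sqrt 2)⁻¹ := by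
    rw [← Real.rpow_add (by norm_num : (0:ℝ) < 2), Real.sqrt_eq_rpow,
      ← Real.rpow_neg (by norm_num : (0:ℝ) ≤ 2)]
    norm_num
  have htt : t * t = w⁻¹ := by
    rw [htdef, hwdef, ← Complex.ofReal_mul, httR, Complex.ofReal_inv]
  have hrr2 : r * r * 2 = 1 := by
    rw [hrw, ← hww]; field_simp
  have hcs : c * c + s * s = 1 := by
    have h : Real.cos (2*θ)^2 + Real.sin (2*θ)^2 = 1 := Real.cos_sq_add_sin_sq (2*θ)
    have h2' : c*c + s*s = ((Real.cos (2*θ)^2 + Real.sin (2*θ)^2 : ℝ) : ℂ) := by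
      rw [hcdef, hsdef]; push_cast; ring
    rw [h2', h]; norm_num
  -- commute facts
  have hc00 : Commute A₀ B₀ := hcomm A₀ (by simp) B₀ (by simp)
  have hc10 : Commute A₁ B₀ := hcomm A₁ (by simp) B₀ (by simp)
  have hc03 : Commute A₀ C₀₁ := hcomm A₀ (by simp) C₀₁ (by simp)
  have hc13 : Commute A₁ C₀₁ := hcomm A₁ (by simp) C₀₁ (by simp)
  have hZAB₀ : Commute ZA B₀ := by rw [hZA]; exact (hc00.add_left hc10).smul_left r
  have hXAB₀ : Commute XA B₀ := by rw [hXA]; exact (hc00.sub_left hc10).smul_left r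
  have hZAC₀₁ : Commute ZA C₀₁ := by rw [hZA]; exact (hc03.add_left hc13).smul_left r
  have hXAC₀₁ : Commute XA C₀₁ := by rw [hXA]; exact (hc03.sub_left hc13).smul_left r
  -- squares on ψ
  have hUUψ : ((A₀+A₁)*(A₀+A₁)) ψ = (2:ℂ) • ψ := by
    have hUU : (A₀+A₁)*(A₀+A₁) = A₀*A₀ + A₁*A₁ + (A₀*A₁ + A₁*A₀) := by noncomm_ring
    rw [hUU, ContinuousLinearMap.add_apply, ContinuousLinearMap.add_apply, hanti, hA₀u, hA₁u]
    simp [two_smul]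
  have hVVψ : ((A₀-A₁)*(A₀-A₁)) ψ = (2:ℂ) • ψ := by
    have hVV : (A₀-A₁)*(A₀-A₁) = A₀*A₀ + A₁*A₁ - (A₀*A₁ + A₁*A₀) := by noncomm_ring
    rw [hVV, ContinuousLinearMap.sub_apply, ContinuousLinearMap.add_apply, hanti, hA₀u, hA₁u]
    simp [two_smul]
  have hZB2ψ : (ZA*B₀) ((ZA*B₀) ψ) = ψ := by
    have hZBZB : (ZA*B₀) * (ZA*B₀) = (r*r) • ((A₀+A₁)*(A₀+A₁)) := by
      rw [(hZAB₀.symm).mul_mul_mul_comm, hB₀u, mul_one, hZA, smul_mul_smul_comm]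
    have h : ((ZA*B₀)*(ZA*B₀)) ψ = ψ := by
      rw [hZBZB, ContinuousLinearMap.smul_apply, hUUψ, smul_smul, hrr2, one_smul]
    simpa [ContinuousLinearMap.mul_apply] using h
  have hXC2ψ : (XA*C₀₁) ((XA*C₀₁) ψ) = ψ := by
    have hXCXC : (XA*C₀₁) * (XA*C₀₁) = (r*r) • ((A₀-A₁)*(A₀-A₁)) := by
      rw [(hXAC₀₁.symm).mul_mul_mul_comm, hC₀₁u, mul_one, hXA, smul_mul_smul_comm]
    have h : ((XA*C₀₁)*(XA*C₀₁)) ψ = ψ := by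
      rw [hXCXC, ContinuousLinearMap.smul_apply, hVVψ, smul_smul, hrr2, one_smul]
    simpa [ContinuousLinearMap.mul_apply] using h
  -- anticommutation
  have hZX : ZA * XA + XA * ZA = 0 := by
    have hUV : (A₀+A₁)*(A₀-A₁) + (A₀-A₁)*(A₀+A₁)
        = A₀*A₀ + A₀*A₀ - A₁*A₁ - A₁*A₁ := by noncomm_ring
    have h : ZA * XA + XA * ZA = (r*r) • ((A₀+A₁)*(A₀-A₁) + (A₀-A₁)*(A₀+A₁)) := by
      rw [hZA, hXA, smul_mul_smul_comm, smul_mul_smul_comm, ← smul_add]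
    rw [h, hUV, hA₀u, hA₁u]
    simp
  have hmix : (ZA*B₀) * (XA*C₀₁) + (XA*C₀₁) * (ZA*B₀) = 0 := by
    have h1 : (ZA*B₀) * (XA*C₀₁) = ZA * XA * (B₀ * C₀₁) :=
      (hXAB₀.symm).mul_mul_mul_comm ZA C₀₁
    have h2 : (XA*C₀₁) * (ZA*B₀) = XA * ZA * (C₀₁ * B₀) :=
      (hZAC₀₁.symm).mul_mul_mul_comm XA B₀
    rw [h1, h2, ← hB₀C₀₁.eq, ← add_mul, hZX, zero_mul]
  have hmixψ : (XA*C₀₁) ((ZA*B₀) ψ) = -((ZA*B₀) ((XA*C₀₁) ψ)) := by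
    have h := ContinuousLinearMap.ext_iff.mp hmix ψ
    simp only [ContinuousLinearMap.add_apply, ContinuousLinearMap.mul_apply,
      ContinuousLinearMap.zero_apply] at h
    exact eq_neg_of_add_eq_zero_right h
  -- the operator Q
  set Q : H →L[ℂ] H := 1 - c • (ZA * B₀) - s • (XA * C₀₁) with hQdef
  have hP : P = t • Q := rfl
  have hPP : P * P = (t*t) • (Q*Q) := by rw [hP, smul_mul_smul_comm]
  have hQapp : ∀ v, Q v = v - c • ((ZA*B₀) v) - s • ((XA*C₀₁) v) := by
    intro v
    rw [hQdef]
    simp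
  have hQQψ : Q (Q ψ) = (2:ℂ) • ψ - (2*c) • ((ZA*B₀) ψ) - (2*s) • ((XA*C₀₁) ψ) := by
    conv_lhs => rw [hQapp ψ]
    rw [map_sub, map_sub, map_smul, map_smul, hQapp, hQapp, hQapp, hZB2ψ, hXC2ψ, hmixψ]
    match_scalars
    · linear_combination hcs
    all_goals ring
  -- inner products
  have hψψ : ⟪ψ, ψ⟫_ℂ = 1 := by rw [inner_self_eq_norm_sq_to_K, hψ]; norm_num
  set z : ℂ := ⟪ψ, ((A₀+A₁) * B₀) ψ⟫_ℂ with hzdef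
  set x : ℂ := ⟪ψ, ((A₀-A₁) * C₀₁) ψ⟫_ℂ with hxdef
  have hz : ⟪ψ, (ZA*B₀) ψ⟫_ℂ = r * z := by
    rw [hZA, smul_mul_assoc, ContinuousLinearMap.smul_apply, inner_smul_right, hzdef]
  have hx : ⟪ψ, (XA*C₀₁) ψ⟫_ℂ = r * x := by
    rw [hXA, smul_mul_assoc, ContinuousLinearMap.smul_apply, inner_smul_right, hxdef]
  have hL : ⟪ψ, (P*P) ψ⟫_ℂ = (t*t) * (2 - 2*c*(r*z) - 2*s*(r*x)) := by
    rw [hPP, ContinuousLinearMap.smul_apply, inner_smul_right, ContinuousLinearMap.mul_apply,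
      hQQψ, inner_sub_right, inner_sub_right, inner_smul_right, inner_smul_right,
      inner_smul_right, hψψ, hz, hx]
    ring
  -- the B₁ and C₀₀ expectations
  have hvb : ⟪ψ, ((A₀-A₁)*B₁) ψ⟫_ℂ = w := by
    have h : r * ⟪ψ, ((A₀-A₁)*B₁) ψ⟫_ℂ = 1 := by
      rw [← inner_smul_right, ← ContinuousLinearMap.smul_apply, ← smul_mul_assoc]
      exact hXB
    rw [hrw] at h
    field_simp at h
    exact h
  have huc : ⟪ψ, ((A₀+A₁)*C₀₀) ψ⟫_ℂ = w := by
    have h : r * ⟪ψ, ((A₀+A₁)*C₀₀) ψ⟫_ℂ = 1 := by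
      rw [← inner_smul_right, ← ContinuousLinearMap.smul_apply, ← smul_mul_assoc]
      exact hZC
    rw [hrw] at h
    field_simp at h
    exact h
  have hS1 : ⟪ψ, S₁ ψ⟫_ℂ = z + w := by
    have h : S₁ = (A₀+A₁)*B₀ + (A₀-A₁)*B₁ := rfl
    rw [h, ContinuousLinearMap.add_apply, inner_add_right, hvb, hzdef]
  have hS2 : ⟪ψ, S₂ ψ⟫_ℂ = w + x := by
    have h : S₂ = (A₀+A₁)*C₀₀ + (A₀-A₁)*C₀₁ := rfl
    rw [h, ContinuousLinearMap.add_apply, inner_add_right, huc, hxdef]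
  have hR : ⟪ψ, Sθ ψ⟫_ℂ = c*((z + w) - w) + s*((w + x) - w) := by
    have h : Sθ = c • (S₁ - w • (1 : H →L[ℂ] H)) + s • (S₂ - w • (1 : H →L[ℂ] H)) := rfl
    rw [h]
    simp only [ContinuousLinearMap.add_apply, ContinuousLinearMap.sub_apply,
      ContinuousLinearMap.smul_apply, ContinuousLinearMap.one_apply,
      inner_add_right, inner_sub_right, inner_smul_right, hψψ, hS1, hS2]
    ring
  rw [hL, hR, htt, hrw]
  field_simp
  linear_combination (c*z + s*x - w) * hww
end

section
/- Under the assumptions that {A₀,A₁}ψ = 0, ⟨Z_A ⊗ C₀₀⟩_ψ = 1, and ⟨X_A ⊗ B₁⟩_ψ = 1 (where Z_A = (A₀+A₁)/√2 and X_A = (A₀−A₁)/√2), the expectation value ⟨S_θ⟩_ψ ≤ √2 holds for every θ, where S_θ = cos 2θ (S₁ − √2·1) + sin 2θ (S₂ − √2·1). -/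
open scoped InnerProductSpace

set_option maxHeartbeats 1000000 in
/-- **Boundary inequality ⟨S_θ⟩ ≤ √2.**  Under the CHSH-saturation consequences
{A₀,A₁}ψ = 0, ⟨Z_A C₀₀⟩_ψ = 1 and ⟨X_A B₁⟩_ψ = 1 (Z_A = (A₀+A₁)/√2, X_A = (A₀−A₁)/√2),
the expectation value of S_θ = cos 2θ (S₁ − √2·1) + sin 2θ (S₂ − √2·1) on the unit
vector ψ is at most √2, for every θ. -/
theorem Stheta_bound
    {H : Type*} [NormedAddCommGroup H] [InnerProductSpace ℂ H] [CompleteSpace H]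
    (A₀ A₁ B₀ B₁ C₀₀ C₀₁ : H →L[ℂ] H)
    (hA₀sa : IsSelfAdjoint A₀) (hA₁sa : IsSelfAdjoint A₁)
    (hB₀sa : IsSelfAdjoint B₀) (hB₁sa : IsSelfAdjoint B₁)
    (hC₀₀sa : IsSelfAdjoint C₀₀) (hC₀₁sa : IsSelfAdjoint C₀₁)
    (hA₀u : A₀ * A₀ = 1) (hA₁u : A₁ * A₁ = 1)
    (hB₀u : B₀ * B₀ = 1) (hB₁u : B₁ * B₁ = 1)
    (hC₀₀u : C₀₀ * C₀₀ = 1) (hC₀₁u : C₀₁ * C₀₁ = 1)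
    (hB₀C₀₀ : Commute B₀ C₀₀) (hB₀C₀₁ : Commute B₀ C₀₁)
    (hcomm : ∀ A ∈ ({A₀, A₁} : Set (H →L[ℂ] H)),
      ∀ B ∈ ({B₀, B₁, C₀₀, C₀₁} : Set (H →L[ℂ] H)), Commute A B)
    (θ : ℝ) (ψ : H) (hψ : ‖ψ‖ = 1)
    (hZC : ⟪ψ, (((((Real.sqrt 2)⁻¹ : ℝ) : ℂ) • (A₀ + A₁)) * C₀₀) ψ⟫_ℂ = 1)
    (hXB : ⟪ψ, (((((Real.sqrt 2)⁻¹ : ℝ) : ℂ) • (A₀ - A₁)) * B₁) ψ⟫_ℂ = 1)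
    (hanti : (A₀ * A₁ + A₁ * A₀) ψ = 0) :
    let ZA := ((((Real.sqrt 2)⁻¹ : ℝ) : ℂ) • (A₀ + A₁))
    let XA := ((((Real.sqrt 2)⁻¹ : ℝ) : ℂ) • (A₀ - A₁))
    let S₁ := (A₀ + A₁) * B₀ + (A₀ - A₁) * B₁
    let S₂ := (A₀ + A₁) * C₀₀ + (A₀ - A₁) * C₀₁
    let Sθ := (Real.cos (2 * θ) : ℂ) • (S₁ - ((Real.sqrt 2 : ℝ) : ℂ) • (1 : H →L[ℂ] H))
      + (Real.sin (2 * θ) : ℂ) • (S₂ - ((Real.sqrt 2 : ℝ) : ℂ) • (1 : H →L[ℂ] H))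
    (⟪ψ, Sθ ψ⟫_ℂ).re ≤ Real.sqrt 2 := by
  intro ZA XA S₁ S₂ Sθ
  set t : ℂ := (((Real.sqrt 2)⁻¹ : ℝ) : ℂ) with ht
  set r : ℂ := ((Real.sqrt 2 : ℝ) : ℂ) with hr
  have hsqrt2 : Real.sqrt 2 ≠ 0 := by positivity
  have hrt : r * t = 1 := by
    rw [ht, hr, ← Complex.ofReal_mul, mul_inv_cancel₀ hsqrt2, Complex.ofReal_one]
  have htt : t * t = (2⁻¹ : ℂ) := by
    rw [ht, ← Complex.ofReal_mul, ← mul_inv, Real.mul_self_sqrt (by norm_num)]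
    norm_num
  set c : ℂ := ((Real.cos (2*θ) : ℝ) : ℂ) with hc
  set s : ℂ := ((Real.sin (2*θ) : ℝ) : ℂ) with hs
  set P : H →L[ℂ] H := A₀ + A₁ with hP
  set Qm : H →L[ℂ] H := A₀ - A₁ with hQm
  -- commutation facts
  have hA₀B₀ := hcomm A₀ (by simp) B₀ (by simp)
  have hA₁B₀ := hcomm A₁ (by simp) B₀ (by simp)
  have hA₀C₀₁ := hcomm A₀ (by simp) C₀₁ (by simp)
  have hA₁C₀₁ := hcomm A₁ (by simp) C₀₁ (by simp)
  have hPB₀ : Commute P B₀ := hA₀B₀.add_left hA₁B₀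
  have hQB₀ : Commute Qm B₀ := hA₀B₀.sub_left hA₁B₀
  have hPC₀₁ : Commute P C₀₁ := hA₀C₀₁.add_left hA₁C₀₁
  have hQC₀₁ : Commute Qm C₀₁ := hA₀C₀₁.sub_left hA₁C₀₁
  -- algebraic identities
  have hPP : P * P = (2:ℂ) • (1 : H →L[ℂ] H) + (A₀ * A₁ + A₁ * A₀) := by
    rw [hP, add_mul, mul_add, mul_add, hA₀u, hA₁u, two_smul]
    abel
  have hQQ : Qm * Qm = (2:ℂ) • (1 : H →L[ℂ] H) - (A₀ * A₁ + A₁ * A₀) := by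
    rw [hQm, sub_mul, mul_sub, mul_sub, hA₀u, hA₁u, two_smul]
    abel
  have hPQ : P * Qm + Qm * P = 0 := by
    rw [hP, hQm, add_mul, mul_sub, mul_sub, sub_mul, mul_add, mul_add, hA₀u, hA₁u]
    abel
  set M : H →L[ℂ] H := ZA * B₀ with hM
  set N : H →L[ℂ] H := XA * C₀₁ with hN
  have hZA : ZA = t • P := rfl
  have hXA : XA = t • Qm := rfl
  have e1 : (P * B₀) * (P * B₀) = P * P := by
    calc (P * B₀) * (P * B₀) = P * ((B₀ * P) * B₀) := by rw [mul_assoc, mul_assoc]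
      _ = P * ((P * B₀) * B₀) := by rw [← hPB₀.eq]
      _ = P * (P * (B₀ * B₀)) := by rw [mul_assoc]
      _ = P * P := by rw [hB₀u, mul_one]
  have e2 : (Qm * C₀₁) * (Qm * C₀₁) = Qm * Qm := by
    calc (Qm * C₀₁) * (Qm * C₀₁) = Qm * ((C₀₁ * Qm) * C₀₁) := by rw [mul_assoc, mul_assoc]
      _ = Qm * ((Qm * C₀₁) * C₀₁) := by rw [hQC₀₁.eq]
      _ = Qm * (Qm * (C₀₁ * C₀₁)) := by rw [mul_assoc]
      _ = Qm * Qm := by rw [hC₀₁u, mul_one]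
  have e3 : (P * B₀) * (Qm * C₀₁) + (Qm * C₀₁) * (P * B₀)
      = (P * Qm + Qm * P) * (B₀ * C₀₁) := by
    have h1 : (P * B₀) * (Qm * C₀₁) = (P * Qm) * (B₀ * C₀₁) := by
      calc (P * B₀) * (Qm * C₀₁) = P * ((B₀ * Qm) * C₀₁) := by rw [mul_assoc, mul_assoc]
        _ = P * ((Qm * B₀) * C₀₁) := by rw [hQB₀.eq]
        _ = (P * Qm) * (B₀ * C₀₁) := by rw [mul_assoc, ← mul_assoc, ← mul_assoc]
    have h2 : (Qm * C₀₁) * (P * B₀) = (Qm * P) * (B₀ * C₀₁) := by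
      calc (Qm * C₀₁) * (P * B₀) = Qm * ((C₀₁ * P) * B₀) := by rw [mul_assoc, mul_assoc]
        _ = Qm * ((P * C₀₁) * B₀) := by rw [hPC₀₁.eq]
        _ = Qm * (P * (C₀₁ * B₀)) := by rw [mul_assoc]
        _ = Qm * (P * (B₀ * C₀₁)) := by rw [hB₀C₀₁.eq]
        _ = (Qm * P) * (B₀ * C₀₁) := by rw [← mul_assoc, ← mul_assoc]
    rw [h1, h2, ← add_mul]
  have hMM : M * M = (2⁻¹ : ℂ) • (P * P) := by
    rw [hM, hZA, smul_mul_assoc, smul_mul_assoc, mul_smul_comm, smul_smul, e1, htt]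
  have hNN : N * N = (2⁻¹ : ℂ) • (Qm * Qm) := by
    rw [hN, hXA, smul_mul_assoc, smul_mul_assoc, mul_smul_comm, smul_smul, e2, htt]
  have hMN : M * N + N * M = 0 := by
    rw [hM, hN, hZA, hXA, smul_mul_assoc, smul_mul_assoc, smul_mul_assoc, smul_mul_assoc,
      mul_smul_comm, mul_smul_comm, smul_smul, smul_smul, ← smul_add, e3, hPQ, zero_mul,
      smul_zero]
  -- vector identities
  have hPPψ : (P * P) ψ = (2:ℂ) • ψ := by
    have h := DFunLike.congr_fun hPP ψ
    simpa [hanti] using h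
  have hQQψ : (Qm * Qm) ψ = (2:ℂ) • ψ := by
    have h := DFunLike.congr_fun hQQ ψ
    simpa [hanti] using h
  set R : H →L[ℂ] H := c • M + s • N with hR
  have hRR : R * R = (c*c) • (M * M) + (s*s) • (N * N) + (c*s) • (M * N + N * M) := by
    rw [hR]
    simp only [add_mul, mul_add, smul_mul_assoc, mul_smul_comm, smul_smul, smul_add]
    module
  have hcs : c * c + s * s = 1 := by
    rw [hc, hs, ← Complex.ofReal_mul, ← Complex.ofReal_mul, ← Complex.ofReal_add,
      ← Complex.ofReal_one]
    norm_cast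
    nlinarith [Real.sin_sq_add_cos_sq (2*θ)]
  have hMψ : M (M ψ) = ψ := by
    have h := DFunLike.congr_fun hMM ψ
    simp only [ContinuousLinearMap.mul_apply, ContinuousLinearMap.smul_apply] at h
    simp only [ContinuousLinearMap.mul_apply] at hPPψ
    rw [h, hPPψ, smul_smul]
    norm_num
  have hNψ : N (N ψ) = ψ := by
    have h := DFunLike.congr_fun hNN ψ
    simp only [ContinuousLinearMap.mul_apply, ContinuousLinearMap.smul_apply] at h
    simp only [ContinuousLinearMap.mul_apply] at hQQψ
    rw [h, hQQψ, smul_smul]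
    norm_num
  have hRRψ : R (R ψ) = ψ := by
    have hRR' : R * R = (c*c) • (M * M) + (s*s) • (N * N) := by
      rw [hRR, hMN, smul_zero, add_zero]
    have h := DFunLike.congr_fun hRR' ψ
    simp only [ContinuousLinearMap.mul_apply, ContinuousLinearMap.add_apply,
      ContinuousLinearMap.smul_apply] at h
    rw [h, hMψ, hNψ, ← add_smul, hcs, one_smul]
  -- self-adjointness
  have htsa : IsSelfAdjoint t := by
    rw [IsSelfAdjoint, Complex.star_def, ht, Complex.conj_ofReal]
  have hcsa : IsSelfAdjoint c := by
    rw [IsSelfAdjoint, Complex.star_def, hc, Complex.conj_ofReal]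
  have hssa : IsSelfAdjoint s := by
    rw [IsSelfAdjoint, Complex.star_def, hs, Complex.conj_ofReal]
  have hZAsa : IsSelfAdjoint ZA := htsa.smul (hA₀sa.add hA₁sa)
  have hXAsa : IsSelfAdjoint XA := htsa.smul (hA₀sa.sub hA₁sa)
  have hMsa : IsSelfAdjoint M := by
    have hcM : Commute ZA B₀ := hPB₀.smul_left t
    rw [hM, IsSelfAdjoint, star_mul, hZAsa.star_eq, hB₀sa.star_eq]
    exact hcM.symm.eq
  have hNsa : IsSelfAdjoint N := by
    have hcN : Commute XA C₀₁ := hQC₀₁.smul_left t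
    rw [hN, IsSelfAdjoint, star_mul, hXAsa.star_eq, hC₀₁sa.star_eq]
    exact hcN.symm.eq
  have hRsa : IsSelfAdjoint R := (hcsa.smul hMsa).add (hssa.smul hNsa)
  have hadj : ContinuousLinearMap.adjoint R = R := hRsa.adjoint_eq
  have hψψ : ⟪ψ, ψ⟫_ℂ = 1 := by
    rw [@inner_self_eq_norm_sq_to_K ℂ, hψ]
    norm_num
  have hRnorm : ⟪R ψ, R ψ⟫_ℂ = 1 := by
    calc ⟪R ψ, R ψ⟫_ℂ = ⟪ψ, (ContinuousLinearMap.adjoint R) (R ψ)⟫_ℂ := by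
          rw [ContinuousLinearMap.adjoint_inner_right]
      _ = ⟪ψ, R (R ψ)⟫_ℂ := by rw [hadj]
      _ = ⟪ψ, ψ⟫_ℂ := by rw [hRRψ]
      _ = 1 := hψψ
  have key : (⟪ψ, R ψ⟫_ℂ).re ≤ 1 := by
    have h0 : (0:ℝ) ≤ ‖ψ - R ψ‖^2 := sq_nonneg _
    rw [@norm_sub_sq ℂ] at h0
    have hn2 : ‖R ψ‖^2 = 1 := by
      have h1 := @inner_self_eq_norm_sq_to_K ℂ H _ _ _ (R ψ)
      rw [hRnorm] at h1
      have h2 : ((‖R ψ‖ ^ 2 : ℝ) : ℂ) = ((1:ℝ) : ℂ) := by push_cast; exact h1.symm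
      exact RCLike.ofReal_inj.mp h2
    rw [hψ, hn2] at h0
    simp only [RCLike.re_to_complex] at h0
    norm_num at h0
    linarith
  -- expectation values
  have hQB₁ψ : ⟪ψ, (Qm * B₁) ψ⟫_ℂ = r := by
    have h : t * ⟪ψ, (Qm * B₁) ψ⟫_ℂ = 1 := by
      rw [← inner_smul_right]
      rw [show t • ((Qm * B₁) ψ) = ((t • Qm) * B₁) ψ from by
        simp [smul_mul_assoc]]
      exact hXB
    have := congrArg (fun z => r * z) h
    simpa [← mul_assoc, hrt] using this
  have hPC₀₀ψ : ⟪ψ, (P * C₀₀) ψ⟫_ℂ = r := by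
    have h : t * ⟪ψ, (P * C₀₀) ψ⟫_ℂ = 1 := by
      rw [← inner_smul_right]
      rw [show t • ((P * C₀₀) ψ) = ((t • P) * C₀₀) ψ from by
        simp [smul_mul_assoc]]
      exact hZC
    have := congrArg (fun z => r * z) h
    simpa [← mul_assoc, hrt] using this
  have hPB₀ψ : ⟪ψ, (P * B₀) ψ⟫_ℂ = r * ⟪ψ, M ψ⟫_ℂ := by
    have : ⟪ψ, M ψ⟫_ℂ = t * ⟪ψ, (P * B₀) ψ⟫_ℂ := by
      rw [hM, hZA, smul_mul_assoc, ContinuousLinearMap.smul_apply, inner_smul_right]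
    rw [this, ← mul_assoc, hrt, one_mul]
  have hQC₀₁ψ : ⟪ψ, (Qm * C₀₁) ψ⟫_ℂ = r * ⟪ψ, N ψ⟫_ℂ := by
    have : ⟪ψ, N ψ⟫_ℂ = t * ⟪ψ, (Qm * C₀₁) ψ⟫_ℂ := by
      rw [hN, hXA, smul_mul_assoc, ContinuousLinearMap.smul_apply, inner_smul_right]
    rw [this, ← mul_assoc, hrt, one_mul]
  have hfinal : ⟪ψ, Sθ ψ⟫_ℂ = r * ⟪ψ, R ψ⟫_ℂ := by
    have hS₁ : ⟪ψ, S₁ ψ⟫_ℂ = r * ⟪ψ, M ψ⟫_ℂ + r := by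
      show ⟪ψ, ((P * B₀ + Qm * B₁)) ψ⟫_ℂ = _
      rw [ContinuousLinearMap.add_apply, inner_add_right, hPB₀ψ, hQB₁ψ]
    have hS₂ : ⟪ψ, S₂ ψ⟫_ℂ = r + r * ⟪ψ, N ψ⟫_ℂ := by
      show ⟪ψ, ((P * C₀₀ + Qm * C₀₁)) ψ⟫_ℂ = _
      rw [ContinuousLinearMap.add_apply, inner_add_right, hPC₀₀ψ, hQC₀₁ψ]
    have hRinner : ⟪ψ, R ψ⟫_ℂ = c * ⟪ψ, M ψ⟫_ℂ + s * ⟪ψ, N ψ⟫_ℂ := by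
      rw [hR]
      simp [inner_add_right, inner_smul_right]
    show ⟪ψ, (c • (S₁ - r • (1:H →L[ℂ] H)) + s • (S₂ - r • (1:H →L[ℂ] H))) ψ⟫_ℂ = _
    simp only [ContinuousLinearMap.add_apply, ContinuousLinearMap.smul_apply,
      ContinuousLinearMap.sub_apply, ContinuousLinearMap.one_apply,
      inner_add_right, inner_smul_right, inner_sub_right]
    rw [hS₁, hS₂, hψψ, hRinner]
    ring
  rw [hfinal, hr, Complex.re_ofReal_mul]
  calc Real.sqrt 2 * (⟪ψ, R ψ⟫_ℂ).re ≤ Real.sqrt 2 * 1 :=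
        mul_le_mul_of_nonneg_left key (Real.sqrt_nonneg 2)
    _ = Real.sqrt 2 := mul_one _
end

section
/- If additionally ⟨S_θ⟩_ψ = √2 (saturation of the boundary), then ψ satisfies the eigenvector-type relation ψ = cos 2θ · (Z_A ⊗ B₀) ψ + sin 2θ · (X_A ⊗ C₀₁) ψ, where Z_A = (A₀+A₁)/√2 and X_A = (A₀−A₁)/√2. -/
open scoped InnerProductSpace

private theorem aux1CHSH {R : Type*} [Ring R] (z b : R) (hbz : Commute b z) (hb : b * b = 1) :
    (z * b) * (z * b) = z * z := by
  calc (z * b) * (z * b) = z * (b * z) * b := by noncomm_ring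
    _ = z * (z * b) * b := by rw [hbz]
    _ = z * z * (b * b) := by noncomm_ring
    _ = z * z := by rw [hb, mul_one]

private theorem aux2CHSH {R : Type*} [Ring R] (z x b c : R)
    (hcz : Commute c z) (hbx : Commute b x) (hbc : Commute b c)
    (hzx : z * x + x * z = 0) :
    (z * b) * (x * c) + (x * c) * (z * b) = 0 := by
  have h1 : (z * b) * (x * c) = (z * x) * (b * c) := by
    calc (z * b) * (x * c) = z * (b * x) * c := by noncomm_ring
      _ = z * (x * b) * c := by rw [hbx]
      _ = (z * x) * (b * c) := by noncomm_ring
  have h2 : (x * c) * (z * b) = (x * z) * (b * c) := by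
    calc (x * c) * (z * b) = x * (c * z) * b := by noncomm_ring
      _ = x * (z * c) * b := by rw [hcz]
      _ = (x * z) * (c * b) := by noncomm_ring
      _ = (x * z) * (b * c) := by rw [hbc]
  rw [h1, h2, ← add_mul, hzx, zero_mul]

/-- **Saturation of the boundary forces an eigenvector relation.**  Under the CHSH-saturation
consequences {A₀,A₁}ψ = 0, ⟨Z_A C₀₀⟩_ψ = ⟨X_A B₁⟩_ψ = 1 (Z_A = (A₀+A₁)/√2, X_A = (A₀−A₁)/√2),
if additionally ⟨S_θ⟩_ψ = √2 then ψ = cos 2θ · (Z_A B₀)ψ + sin 2θ · (X_A C₀₁)ψ. -/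
theorem boundary_saturation_state_relation
    {H : Type*} [NormedAddCommGroup H] [InnerProductSpace ℂ H] [CompleteSpace H]
    (A₀ A₁ B₀ B₁ C₀₀ C₀₁ : H →L[ℂ] H)
    (hA₀sa : IsSelfAdjoint A₀) (hA₁sa : IsSelfAdjoint A₁)
    (hB₀sa : IsSelfAdjoint B₀) (hB₁sa : IsSelfAdjoint B₁)
    (hC₀₀sa : IsSelfAdjoint C₀₀) (hC₀₁sa : IsSelfAdjoint C₀₁)
    (hA₀u : A₀ * A₀ = 1) (hA₁u : A₁ * A₁ = 1)
    (hB₀u : B₀ * B₀ = 1) (hB₁u : B₁ * B₁ = 1)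
    (hC₀₀u : C₀₀ * C₀₀ = 1) (hC₀₁u : C₀₁ * C₀₁ = 1)
    (hB₀C₀₀ : Commute B₀ C₀₀) (hB₀C₀₁ : Commute B₀ C₀₁)
    (hcomm : ∀ A ∈ ({A₀, A₁} : Set (H →L[ℂ] H)),
      ∀ B ∈ ({B₀, B₁, C₀₀, C₀₁} : Set (H →L[ℂ] H)), Commute A B)
    (θ : ℝ) (ψ : H) (hψ : ‖ψ‖ = 1)
    (hZC : ⟪ψ, (((((Real.sqrt 2)⁻¹ : ℝ) : ℂ) • (A₀ + A₁)) * C₀₀) ψ⟫_ℂ = 1)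
    (hXB : ⟪ψ, (((((Real.sqrt 2)⁻¹ : ℝ) : ℂ) • (A₀ - A₁)) * B₁) ψ⟫_ℂ = 1)
    (hanti : (A₀ * A₁ + A₁ * A₀) ψ = 0) :
    let ZA := ((((Real.sqrt 2)⁻¹ : ℝ) : ℂ) • (A₀ + A₁))
    let XA := ((((Real.sqrt 2)⁻¹ : ℝ) : ℂ) • (A₀ - A₁))
    let S₁ := (A₀ + A₁) * B₀ + (A₀ - A₁) * B₁
    let S₂ := (A₀ + A₁) * C₀₀ + (A₀ - A₁) * C₀₁
    let Sθ := (Real.cos (2 * θ) : ℂ) • (S₁ - ((Real.sqrt 2 : ℝ) : ℂ) • (1 : H →L[ℂ] H))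
      + (Real.sin (2 * θ) : ℂ) • (S₂ - ((Real.sqrt 2 : ℝ) : ℂ) • (1 : H →L[ℂ] H))
    ⟪ψ, Sθ ψ⟫_ℂ = ((Real.sqrt 2 : ℝ) : ℂ) →
    ψ = (Real.cos (2 * θ) : ℂ) • (ZA * B₀) ψ + (Real.sin (2 * θ) : ℂ) • (XA * C₀₁) ψ := by
  intro ZA XA S₁ S₂ Sθ hSθ
  -- scalar abbreviations
  set c : ℂ := (Real.cos (2 * θ) : ℂ) with hc
  set s : ℂ := (Real.sin (2 * θ) : ℂ) with hs
  set t : ℂ := ((Real.sqrt 2 : ℝ) : ℂ) with ht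
  set u : ℂ := (((Real.sqrt 2)⁻¹ : ℝ) : ℂ) with hudef
  have hsqrt2 : Real.sqrt 2 * Real.sqrt 2 = 2 := Real.mul_self_sqrt (by norm_num)
  have hsqrt2ne : Real.sqrt 2 ≠ 0 := by positivity
  have hu : u * t = 1 := by
    rw [hudef, ht, ← Complex.ofReal_mul, inv_mul_cancel₀ hsqrt2ne, Complex.ofReal_one]
  have huu : u * u = (1/2 : ℂ) := by
    rw [hudef, ← Complex.ofReal_mul, ← mul_inv, hsqrt2]
    norm_num
  have hcs : c * c + s * s = 1 := by
    have h := Real.sin_sq_add_cos_sq (2 * θ)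
    rw [hc, hs, ← Complex.ofReal_mul, ← Complex.ofReal_mul, ← Complex.ofReal_add]
    norm_cast
    nlinarith [h]
  -- explicit operators
  set ZA' : H →L[ℂ] H := u • (A₀ + A₁) with hZA'
  set XA' : H →L[ℂ] H := u • (A₀ - A₁) with hXA'
  -- commutation facts
  have cA0B0 : Commute A₀ B₀ := hcomm A₀ (by simp) B₀ (by simp)
  have cA1B0 : Commute A₁ B₀ := hcomm A₁ (by simp) B₀ (by simp)
  have cA0C1 : Commute A₀ C₀₁ := hcomm A₀ (by simp) C₀₁ (by simp)
  have cA1C1 : Commute A₁ C₀₁ := hcomm A₁ (by simp) C₀₁ (by simp)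
  have commBZA : Commute B₀ ZA' := by
    rw [hZA']
    exact (cA0B0.symm.add_right cA1B0.symm).smul_right u
  have commBXA : Commute B₀ XA' := by
    rw [hXA']
    exact (cA0B0.symm.sub_right cA1B0.symm).smul_right u
  have commCZA : Commute C₀₁ ZA' := by
    rw [hZA']
    exact (cA0C1.symm.add_right cA1C1.symm).smul_right u
  have commCXA : Commute C₀₁ XA' := by
    rw [hXA']
    exact (cA0C1.symm.sub_right cA1C1.symm).smul_right u
  -- squares and anticommutator of ZA', XA'
  have hZZψ : (ZA' * ZA') ψ = ψ := by
    have hMM : (A₀ + A₁) * (A₀ + A₁) = A₀ * A₀ + A₁ * A₁ + (A₀ * A₁ + A₁ * A₀) := by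
      noncomm_ring
    rw [hZA', smul_mul_smul_comm, huu, hMM, hA₀u, hA₁u]
    simp only [ContinuousLinearMap.smul_apply, ContinuousLinearMap.add_apply,
      ContinuousLinearMap.one_apply, hanti, add_zero]
    rw [← two_smul ℂ ψ, smul_smul]
    norm_num
  have hXXψ : (XA' * XA') ψ = ψ := by
    have hMM : (A₀ - A₁) * (A₀ - A₁) = A₀ * A₀ + A₁ * A₁ - (A₀ * A₁ + A₁ * A₀) := by
      noncomm_ring
    rw [hXA', smul_mul_smul_comm, huu, hMM, hA₀u, hA₁u]
    simp only [ContinuousLinearMap.smul_apply, ContinuousLinearMap.sub_apply,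
      ContinuousLinearMap.add_apply, ContinuousLinearMap.one_apply, hanti, sub_zero]
    rw [← two_smul ℂ ψ, smul_smul]
    norm_num
  have hZX : ZA' * XA' + XA' * ZA' = 0 := by
    have hMM : (A₀ + A₁) * (A₀ - A₁) + (A₀ - A₁) * (A₀ + A₁)
        = (A₀ * A₀ - A₁ * A₁) + (A₀ * A₀ - A₁ * A₁) := by noncomm_ring
    rw [hZA', hXA', smul_mul_smul_comm, smul_mul_smul_comm, ← smul_add, hMM, hA₀u, hA₁u]
    simp
  -- the operator T
  set zb : H →L[ℂ] H := ZA' * B₀ with hzb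
  set xc : H →L[ℂ] H := XA' * C₀₁ with hxc
  set T : H →L[ℂ] H := c • zb + s • xc with hT
  -- T*T acting on ψ
  have e1 : zb * zb = ZA' * ZA' := aux1CHSH ZA' B₀ commBZA hB₀u
  have e2 : xc * xc = XA' * XA' := aux1CHSH XA' C₀₁ commCXA hC₀₁u
  have e3 : zb * xc + xc * zb = 0 := aux2CHSH ZA' XA' B₀ C₀₁ commCZA commBXA hB₀C₀₁ hZX
  have hTTop : T * T = (c * c) • (zb * zb) + ((c * s) • (zb * xc + xc * zb)
      + (s * s) • (xc * xc)) := by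
    rw [hT]
    rw [add_mul, mul_add, mul_add, smul_mul_smul_comm, smul_mul_smul_comm,
      smul_mul_smul_comm, smul_mul_smul_comm, smul_add]
    rw [mul_comm s c]
    abel
  have hTTψ : (T * T) ψ = ψ := by
    rw [hTTop, e1, e2, e3, smul_zero, zero_add]
    simp only [ContinuousLinearMap.add_apply, ContinuousLinearMap.smul_apply, hZZψ, hXXψ]
    rw [← add_smul, hcs, one_smul]
  -- self-adjointness of T
  have hstaru : star u = u := by rw [hudef]; exact Complex.conj_ofReal _
  have hZAsa : IsSelfAdjoint ZA' := by
    rw [hZA', IsSelfAdjoint, star_smul, (hA₀sa.add hA₁sa).star_eq, hstaru]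
  have hXAsa : IsSelfAdjoint XA' := by
    rw [hXA', IsSelfAdjoint, star_smul, (hA₀sa.sub hA₁sa).star_eq, hstaru]
  have hzbsa : IsSelfAdjoint zb := by
    rw [hzb, IsSelfAdjoint, star_mul, hB₀sa.star_eq, hZAsa.star_eq]
    exact commBZA
  have hxcsa : IsSelfAdjoint xc := by
    rw [hxc, IsSelfAdjoint, star_mul, hC₀₁sa.star_eq, hXAsa.star_eq]
    exact commCXA
  have hTsa : IsSelfAdjoint T := by
    rw [hT, IsSelfAdjoint, star_add, star_smul, star_smul, hzbsa.star_eq, hxcsa.star_eq,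
      hc, hs, Complex.star_def, Complex.conj_ofReal, Complex.conj_ofReal]
  have hsym := hTsa.isSymmetric
  -- norm of ψ
  have hn : ⟪ψ, ψ⟫_ℂ = 1 := by
    rw [inner_self_eq_norm_sq_to_K, hψ]
    norm_num
  -- ⟪ψ, T ψ⟫ = 1 from the saturation hypothesis
  have hSθ' : ⟪ψ, ((c • ((A₀ + A₁) * B₀ + (A₀ - A₁) * B₁ - t • (1 : H →L[ℂ] H)))
      + s • ((A₀ + A₁) * C₀₀ + (A₀ - A₁) * C₀₁ - t • (1 : H →L[ℂ] H))) ψ⟫_ℂ = t := hSθ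
  have key : c * ⟪ψ, zb ψ⟫_ℂ + s * ⟪ψ, xc ψ⟫_ℂ = 1 := by
    rw [hzb, hxc, hZA', hXA']
    simp only [ContinuousLinearMap.mul_apply, ContinuousLinearMap.add_apply,
      ContinuousLinearMap.sub_apply, ContinuousLinearMap.smul_apply,
      ContinuousLinearMap.one_apply, inner_add_right, inner_sub_right,
      inner_smul_right, hn, hZA', hXA'] at hSθ' hZC hXB ⊢
    linear_combination u * hSθ' - c * hXB - s * hZC + (c + s + 1) * hu
  have hinner1 : ⟪ψ, T ψ⟫_ℂ = 1 := by
    rw [hT]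
    simp only [ContinuousLinearMap.add_apply, ContinuousLinearMap.smul_apply,
      inner_add_right, inner_smul_right]
    exact key
  have hinner2 : ⟪T ψ, ψ⟫_ℂ = 1 := by
    rw [← inner_conj_symm, hinner1, map_one]
  have hinner3 : ⟪T ψ, T ψ⟫_ℂ = 1 := by
    have h3 : ⟪T ψ, T ψ⟫_ℂ = ⟪ψ, T (T ψ)⟫_ℂ := hsym ψ (T ψ)
    have h4 : T (T ψ) = (T * T) ψ := rfl
    rw [h3, h4, hTTψ, hn]
  have hsub : ⟪ψ - T ψ, ψ - T ψ⟫_ℂ = 0 := by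
    rw [inner_sub_sub_self, hn, hinner1, hinner2, hinner3]
    ring
  have hfin : ψ = T ψ := sub_eq_zero.mp (inner_self_eq_zero.mp hsub)
  show ψ = c • (ZA' * B₀) ψ + s • (XA' * C₀₁) ψ
  calc ψ = T ψ := hfin
    _ = c • (ZA' * B₀) ψ + s • (XA' * C₀₁) ψ := by
        rw [hT, hzb, hxc]
        simp [ContinuousLinearMap.add_apply, ContinuousLinearMap.smul_apply]
end

section
/- For the explicit qubit protocol with state ψ = |φ⁺⟩_{AB'} ⊗ (cos θ |0⟩ + sin θ |1⟩)_{B''}, Alice observables A₀ = (σ_z+σ_x)/√2, A₁ = (σ_z−σ_x)/√2, and Bob observables B₀ = σ_z⊗σ_z, B₁ = σ_x⊗1, C₀₀ = σ_z⊗1, C₀₁ = σ_x⊗σ_x, one has ⟨S_c⟩_ψ = 2√2 and ⟨S_θ⟩_ψ = √2. -/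
open Matrix
open Kronecker

noncomputable section

def σx : Matrix (Fin 2) (Fin 2) ℂ := !![0, 1; 1, 0]
def σz : Matrix (Fin 2) (Fin 2) ℂ := !![1, 0; 0, -1]

/-- The Bell state |φ⁺⟩ = (|00⟩ + |11⟩)/√2. -/
def φplus : Fin 2 × Fin 2 → ℂ := fun p => if p.1 = p.2 then ((Real.sqrt 2)⁻¹ : ℝ) else 0

set_option maxHeartbeats 1600000 in
/-- **The explicit sequential-CHSH qubit protocol reaches the boundary.**
With ψ = |φ⁺⟩_{AB'} ⊗ (cos θ|0⟩ + sin θ|1⟩)_{B''}, A₀ = (σ_z+σ_x)/√2, A₁ = (σ_z−σ_x)/√2,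
B₀ = σ_z⊗σ_z, B₁ = σ_x⊗1, C₀₀ = σ_z⊗1, C₀₁ = σ_x⊗σ_x, one has ⟨S_c⟩_ψ = 2√2 and
⟨S_θ⟩_ψ = √2, where S_c = (A₀+A₁)⊗C₀₀ + (A₀−A₁)⊗B₁,
S₁ = (A₀+A₁)⊗B₀ + (A₀−A₁)⊗B₁, S₂ = (A₀+A₁)⊗C₀₀ + (A₀−A₁)⊗C₀₁ and
S_θ = cos 2θ (S₁ − √2·1) + sin 2θ (S₂ − √2·1). -/
theorem sequential_chsh_protocol_boundary (θ : ℝ) :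
    let ψ : Fin 2 × (Fin 2 × Fin 2) → ℂ := fun p =>
      φplus (p.1, p.2.1) * (if p.2.2 = 0 then (Real.cos θ : ℂ) else (Real.sin θ : ℂ))
    let A₀ : Matrix (Fin 2) (Fin 2) ℂ := (((Real.sqrt 2)⁻¹ : ℝ) : ℂ) • (σz + σx)
    let A₁ : Matrix (Fin 2) (Fin 2) ℂ := (((Real.sqrt 2)⁻¹ : ℝ) : ℂ) • (σz - σx)
    let B₀ := σz ⊗ₖ σz
    let B₁ := σx ⊗ₖ (1 : Matrix (Fin 2) (Fin 2) ℂ)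
    let C₀₀ := σz ⊗ₖ (1 : Matrix (Fin 2) (Fin 2) ℂ)
    let C₀₁ := σx ⊗ₖ σx
    let Sc := (A₀ + A₁) ⊗ₖ C₀₀ + (A₀ - A₁) ⊗ₖ B₁
    let S₁ := (A₀ + A₁) ⊗ₖ B₀ + (A₀ - A₁) ⊗ₖ B₁
    let S₂ := (A₀ + A₁) ⊗ₖ C₀₀ + (A₀ - A₁) ⊗ₖ C₀₁
    let Sθ := (Real.cos (2 * θ) : ℂ) •
        (S₁ - ((Real.sqrt 2 : ℝ) : ℂ) • (1 : Matrix (Fin 2 × (Fin 2 × Fin 2)) (Fin 2 × (Fin 2 × Fin 2)) ℂ))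
      + (Real.sin (2 * θ) : ℂ) •
        (S₂ - ((Real.sqrt 2 : ℝ) : ℂ) • (1 : Matrix (Fin 2 × (Fin 2 × Fin 2)) (Fin 2 × (Fin 2 × Fin 2)) ℂ))
    star ψ ⬝ᵥ (Sc *ᵥ ψ) = (2 * Real.sqrt 2 : ℝ) ∧
    star ψ ⬝ᵥ (Sθ *ᵥ ψ) = (Real.sqrt 2 : ℝ) := by
  intro ψ A₀ A₁ B₀ B₁ C₀₀ C₀₁ Sc S₁ S₂ Sθ
  have h2 : ((Real.sqrt 2 : ℝ) : ℂ) * ((Real.sqrt 2 : ℝ) : ℂ) = 2 := by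
    norm_cast
    exact Real.mul_self_sqrt (by norm_num)
  have hpyth : (Real.cos θ : ℂ)^2 + (Real.sin θ : ℂ)^2 = 1 := by
    norm_cast; exact_mod_cast Real.cos_sq_add_sin_sq θ
  have hinv : (((Real.sqrt 2 : ℝ) : ℂ))⁻¹ = ((Real.sqrt 2 : ℝ) : ℂ) / 2 := by
    rw [eq_div_iff (by norm_num : (2:ℂ) ≠ 0), ← h2]
    field_simp
  have hc2 : ((Real.cos (2*θ) : ℝ) : ℂ) = (Real.cos θ : ℂ)^2 - (Real.sin θ : ℂ)^2 := by
    norm_cast; exact_mod_cast Real.cos_two_mul' θ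
  have hs2 : ((Real.sin (2*θ) : ℝ) : ℂ) = 2 * (Real.sin θ : ℂ) * (Real.cos θ : ℂ) := by
    norm_cast; exact_mod_cast Real.sin_two_mul θ
  constructor
  · simp only [ψ, Sc, A₀, A₁, B₁, C₀₀, σx, σz, φplus, dotProduct, mulVec,
      Fintype.sum_prod_type, Fin.sum_univ_two, kroneckerMap_apply, Pi.star_apply,
      Matrix.add_apply, Matrix.sub_apply, Matrix.smul_apply, smul_eq_mul,
      Matrix.cons_val', Matrix.cons_val_zero, Matrix.cons_val_one, Matrix.head_cons,
      Matrix.empty_val', Matrix.cons_val_fin_one, Matrix.head_fin_const,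
      Matrix.one_apply, star_mul']
    norm_num [hinv, Matrix.one_apply, ← Complex.ofReal_cos, ← Complex.ofReal_sin,
      Complex.conj_ofReal]
    linear_combination (((Real.sqrt 2 :ℝ):ℂ) * (((Real.sqrt 2:ℝ):ℂ) * ((Real.sqrt 2:ℝ):ℂ))) * hpyth +
      ((Real.sqrt 2:ℝ):ℂ) * h2
  · simp only [ψ, Sθ, S₁, S₂, A₀, A₁, B₀, B₁, C₀₀, C₀₁, σx, σz, φplus, dotProduct, mulVec,
      Fintype.sum_prod_type, Fin.sum_univ_two, kroneckerMap_apply, Pi.star_apply,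
      Matrix.add_apply, Matrix.sub_apply, Matrix.smul_apply, smul_eq_mul,
      Matrix.cons_val', Matrix.cons_val_zero, Matrix.cons_val_one, Matrix.head_cons,
      Matrix.empty_val', Matrix.cons_val_fin_one, Matrix.head_fin_const,
      Matrix.one_apply, star_mul']
    norm_num [hinv, hc2, hs2, Matrix.one_apply, ← Complex.ofReal_cos, ← Complex.ofReal_sin,
      Complex.conj_ofReal, Prod.ext_iff, Prod.mk.injEq, Prod.fst_zero, Prod.snd_zero,
      Prod.fst_one, Prod.snd_one]
    linear_combination (((Real.sqrt 2:ℝ):ℂ)/2 * ((Real.cos θ:ℂ)^2 + (Real.sin θ:ℂ)^2)^2) * h2 +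
      (((Real.sqrt 2:ℝ):ℂ) * ((Real.cos θ:ℂ)^2 + (Real.sin θ:ℂ)^2 + 1)) * hpyth


end
end
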